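/- In the semiring ℕ of natural numbers, every finitely generated projective module is free, and consequently the Grothendieck group of the monoid of isomorphism classes of finitely generated projective ℕ-modules (equivalently, of finitely generated free ℕ-modules, classified by their rank) is isomorphic to ℤ. -/

import Mathlib

/-- The Grothendieck group (group completion) of a commutative monoid `M`, realized as
the localization of `M` at the top submonoid. -/
abbrev GrothendieckGroup (M : Type*) [AddCommMonoid M] :=
  AddLocalization (⊤ : AddSubmonoid M)

/-- The canonical map `[·] : M → Gr(M)`. -/
def grCls {M : Type*} [AddCommMonoid M] (a : M) : GrothendieckGroup M :=
  AddLocalization.mk a 0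

theorem retract_free (M : Type) [AddCommMonoid M] (k : ℕ) (f : M →+ (Fin k → ℕ))
    (p : (Fin k → ℕ) →+ M) (hpf : p.comp f = AddMonoidHom.id M) :
    ∃ m : ℕ, Nonempty (M ≃+ (Fin m → ℕ)) := by
  classical
  set e : (Fin k → ℕ) →+ (Fin k → ℕ) := f.comp p with he
  have hpf' : ∀ m, p (f m) = m := fun m => DFunLike.congr_fun hpf m
  have hee : ∀ x, e (e x) = e x := fun x => by simp [he, hpf']
  set E : Fin k → Fin k → ℕ := fun a b => e (Pi.single b 1) a with hE
  -- expansion of e in terms of the matrix E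
  have hexp : ∀ (x : Fin k → ℕ) (a : Fin k), e x a = ∑ l, E a l * x l := by
    intro x a
    have hx : x = ∑ l, x l • Pi.single l (1 : ℕ) := by
      funext b
      simp [Finset.sum_apply, Pi.single_apply]
    conv_lhs => rw [hx]
    rw [map_sum]
    simp only [Finset.sum_apply, map_nsmul, Pi.smul_apply, smul_eq_mul]
    exact Finset.sum_congr rfl fun l _ => mul_comm _ _
  have hidem : ∀ a b, ∑ l, E a l * E l b = E a b := by
    intro a b
    have h1 := congrFun (hee (Pi.single b 1)) a
    rw [hexp (e (Pi.single b 1)) a] at h1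
    exact h1
  have hdiag : ∀ a, E a a ≤ 1 := by
    intro a
    have h1 : E a a * E a a ≤ E a a := by
      conv_rhs => rw [← hidem a a]
      exact Finset.single_le_sum (f := fun l => E a l * E l a) (fun i _ => Nat.zero_le _)
        (Finset.mem_univ a)
    nlinarith
  have hII : ∀ a b, a ≠ b → E a a = 1 → E b b = 1 → E a b = 0 := by
    intro a b hab ha hb
    have h1 : ∑ l ∈ ({a, b} : Finset (Fin k)), E a l * E l b ≤ ∑ l, E a l * E l b :=
      Finset.sum_le_sum_of_subset (Finset.subset_univ _)
    rw [Finset.sum_pair hab, hidem, ha, hb] at h1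
    omega
  set I : Finset (Fin k) := Finset.univ.filter (fun a => E a a = 1) with hI
  have hIm : ∀ a, a ∈ I ↔ E a a = 1 := by intro a; simp [hI]
  set c : Fin k → (Fin k → ℕ) := fun j a => E a j with hc
  have hdelta : ∀ i i', i ∈ I → i' ∈ I → E i' i = if i' = i then 1 else 0 := by
    intro i i' hi hi'
    rcases eq_or_ne i' i with h | h
    · subst h; simp [(hIm i').1 hi']
    · simp [h, hII i' i h ((hIm i').1 hi') ((hIm i).1 hi)]
  -- matrix powers for the acyclicity argument
  set Em : Matrix (Fin k) (Fin k) ℕ := Matrix.of E with hEm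
  have hEmsq : Em * Em = Em := by
    ext a b
    rw [Matrix.mul_apply]
    exact hidem a b
  have hEmpow : ∀ n, Em ^ (n + 1) = Em := by
    intro n
    induction n with
    | zero => exact pow_one Em
    | succ n ih => rw [pow_succ, ih, hEmsq]
  set r : Fin k → Fin k → Prop := fun l j => E l l = 0 ∧ E j j = 0 ∧ l ≠ j ∧ E l j ≠ 0 with hr
  have htg : ∀ a b, Relation.TransGen r a b → E a a = 0 ∧ ∃ n, 0 < (Em ^ (n + 1)) a b := by
    intro a b h
    induction h with
    | single h => exact ⟨h.1, 0, by rw [pow_one]; exact Nat.pos_of_ne_zero h.2.2.2⟩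
    | tail h1 h2 ih =>
      rename_i b' c'
      obtain ⟨ha, n, hn⟩ := ih
      refine ⟨ha, n + 1, ?_⟩
      rw [pow_succ, Matrix.mul_apply]
      have hstep : Em b' c' ≠ 0 := h2.2.2.2
      calc 0 < (Em ^ (n + 1)) a b' * Em b' c' := Nat.mul_pos hn (Nat.pos_of_ne_zero hstep)
        _ ≤ ∑ l, (Em ^ (n + 1)) a l * Em l c' :=
          Finset.single_le_sum (f := fun l => (Em ^ (n + 1)) a l * Em l c')
            (fun i _ => Nat.zero_le _) (Finset.mem_univ b')
  haveI : IsTrans (Fin k) (Relation.TransGen r) := ⟨fun _ _ _ h1 h2 => h1.trans h2⟩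
  haveI : IsIrrefl (Fin k) (Relation.TransGen r) := ⟨by
    intro a h
    obtain ⟨ha, n, hn⟩ := htg a a h
    rw [hEmpow] at hn
    have : Em a a = E a a := rfl
    omega⟩
  have hwf : WellFounded r :=
    Subrelation.wf (fun h => Relation.TransGen.single h)
      (Finite.wellFounded_of_trans_of_irrefl _)
  -- every column lies in the span of the I-columns
  have hrep : ∀ j, ∃ d : Fin k → ℕ, c j = ∑ i ∈ I, d i • c i := by
    intro j
    induction j using WellFounded.induction hwf with
    | _ j IH =>
    by_cases hj : j ∈ I
    · refine ⟨fun i => if i = j then 1 else 0, ?_⟩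
      have hs : (∑ i ∈ I, (fun i => if i = j then (1:ℕ) else 0) i • c i)
          = ∑ i ∈ I, (if i = j then c i else 0) :=
        Finset.sum_congr rfl fun i _ => by rcases eq_or_ne i j with h|h <;> simp [h]
      rw [hs, Finset.sum_ite_eq' I j c, if_pos hj]
    · have hj0 : E j j = 0 := by
        have h1 := hdiag j
        have h2 : ¬ E j j = 1 := by simpa [hIm] using hj
        omega
      have hexpand : c j = ∑ l, E l j • c l := by
        funext a
        rw [Finset.sum_apply]
        have : (c j) a = E a j := rfl
        rw [this, ← hidem a j]
        exact Finset.sum_congr rfl fun l _ => by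
          simp [hc, smul_eq_mul, mul_comm]
      have hterm : ∀ l : Fin k, ∃ d : Fin k → ℕ, E l j • c l = ∑ i ∈ I, d i • c i := by
        intro l
        rcases Nat.eq_zero_or_pos (E l j) with h0 | hpos
        · exact ⟨fun _ => 0, by simp [h0]⟩
        by_cases hl : l ∈ I
        · refine ⟨fun i => if i = l then E l j else 0, ?_⟩
          have hs : (∑ i ∈ I, (fun i => if i = l then E l j else 0) i • c i)
              = ∑ i ∈ I, (if i = l then E l j • c i else 0) :=
            Finset.sum_congr rfl fun i _ => by rcases eq_or_ne i l with h|h <;> simp [h]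
          rw [hs, Finset.sum_ite_eq' I l (fun i => E l j • c i), if_pos hl]
        · have hl0 : E l l = 0 := by
            have h1 := hdiag l
            have h2 : ¬ E l l = 1 := by simpa [hIm] using hl
            omega
          have hlj : l ≠ j := by
            rintro rfl
            omega
          obtain ⟨d, hd⟩ := IH l ⟨hl0, hj0, hlj, by omega⟩
          refine ⟨fun i => E l j * d i, ?_⟩
          rw [hd, Finset.smul_sum]
          exact Finset.sum_congr rfl fun i _ => (smul_smul _ _ _)
      choose D hD using hterm
      refine ⟨fun i => ∑ l, D l i, ?_⟩
      rw [hexpand]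
      calc ∑ l, E l j • c l = ∑ l, ∑ i ∈ I, D l i • c i :=
            Finset.sum_congr rfl fun l _ => hD l
        _ = ∑ i ∈ I, ∑ l, D l i • c i := Finset.sum_comm
        _ = ∑ i ∈ I, (∑ l, D l i) • c i := by
            exact Finset.sum_congr rfl fun i _ => (Finset.sum_smul).symm
  -- coefficients on I are determined
  have hcoef : ∀ (d : Fin k → ℕ) (i' : Fin k), i' ∈ I → (∑ i ∈ I, d i • c i) i' = d i' := by
    intro d i' hi'
    rw [Finset.sum_apply]
    have h1 : ∀ i ∈ I, (d i • c i) i' = if i' = i then d i else 0 := by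
      intro i hi
      have hd : (d i • c i) i' = d i * E i' i := rfl
      rw [hd, hdelta i i' hi hi']
      rcases eq_or_ne i' i with h | h <;> simp [h]
    rw [Finset.sum_congr rfl h1]
    simp [Finset.sum_ite_eq, hi']
  have claimA : ∀ j, c j = ∑ i ∈ I, c j i • c i := by
    intro j
    obtain ⟨d, hd⟩ := hrep j
    rw [hd]
    refine Finset.sum_congr rfl fun i hi => ?_
    rw [hcoef d i hi]
  -- main lemma: fixed points are I-combinations of columns
  have hmain : ∀ x : Fin k → ℕ, e x = x → x = ∑ i ∈ I, x i • c i := by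
    intro x hx
    have h1 : x = ∑ l, x l • c l := by
      funext a
      conv_lhs => rw [← hx]
      rw [hexp, Finset.sum_apply]
      exact Finset.sum_congr rfl fun l _ => by simp [hc, mul_comm]
    have hxa : ∀ a, x a = ∑ l, E a l * x l := fun a => by
      conv_lhs => rw [← hx]; rw [hexp]
    calc x = ∑ l, x l • c l := h1
      _ = ∑ l, x l • ∑ i ∈ I, c l i • c i := by
          exact Finset.sum_congr rfl fun l _ => by rw [← claimA l]
      _ = ∑ l, ∑ i ∈ I, (x l * c l i) • c i := by
          exact Finset.sum_congr rfl fun l _ => by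
            rw [Finset.smul_sum]
            exact Finset.sum_congr rfl fun i _ => (smul_smul _ _ _)
      _ = ∑ i ∈ I, ∑ l, (x l * c l i) • c i := Finset.sum_comm
      _ = ∑ i ∈ I, x i • c i := by
          refine Finset.sum_congr rfl fun i hi => ?_
          rw [← Finset.sum_smul]
          congr 1
          rw [hxa i]
          exact Finset.sum_congr rfl fun l _ => by simp [hc, mul_comm]
  -- build the equivalence
  have hfix : ∀ m : M, e (f m) = f m := fun m => by simp [he, hpf']
  have finj : Function.Injective f := fun a b h => by rw [← hpf' a, ← hpf' b, h]
  let φ : M →+ ({x // x ∈ I} → ℕ) :=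
    { toFun := fun m i => f m i.1
      map_zero' := by funext i; simp
      map_add' := fun a b => by funext i; simp }
  let ext : ({x // x ∈ I} → ℕ) →+ (Fin k → ℕ) :=
    { toFun := fun a l => if h : l ∈ I then a ⟨l, h⟩ else 0
      map_zero' := by funext l; simp
      map_add' := fun a b => by funext l; by_cases h : l ∈ I <;> simp [h] }
  let ψ : ({x // x ∈ I} → ℕ) →+ M := p.comp ext
  have left : ∀ m : M, ψ (φ m) = m := by
    intro m
    apply finj
    show f (p (ext (φ m))) = f m
    have h1 : e (ext (φ m)) = f m := by
      funext a
      rw [hexp]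
      have hext : ∀ l, (ext (φ m)) l = if h : l ∈ I then (φ m) ⟨l, h⟩ else 0 := fun _ => rfl
      have hφ : ∀ i, (φ m) i = f m i.1 := fun _ => rfl
      have h2 : ∀ l, E a l * (ext (φ m)) l = if l ∈ I then E a l * f m l else 0 := by
        intro l
        by_cases h : l ∈ I
        · rw [hext, dif_pos h, if_pos h, hφ]
        · rw [hext, dif_neg h, if_neg h, mul_zero]
      rw [Finset.sum_congr rfl fun l _ => h2 l, ← Finset.sum_filter]
      have h3 : Finset.univ.filter (fun l => l ∈ I) = I := by
        ext l; simp
      rw [h3]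
      conv_rhs => rw [hmain (f m) (hfix m)]
      rw [Finset.sum_apply]
      exact Finset.sum_congr rfl fun i _ => by simp [hc, mul_comm]
    exact h1 ▸ rfl
  have right : ∀ a : {x // x ∈ I} → ℕ, φ (ψ a) = a := by
    intro a
    funext i
    show f (p (ext a)) i.1 = a i
    have h1 : e (ext a) i.1 = a i := by
      rw [hexp]
      have hext : ∀ l, (ext a) l = if h : l ∈ I then a ⟨l, h⟩ else 0 := fun _ => rfl
      have h2 : ∀ l, E i.1 l * (ext a) l = if l = i.1 then a i else 0 := by
        intro l
        rcases eq_or_ne l i.1 with h | h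
        · rw [hext, if_pos h]
          have hd : E i.1 l = 1 := by rw [h]; exact (hIm i.1).1 i.2
          have hmem : l ∈ I := h ▸ i.2
          rw [dif_pos hmem, hd, one_mul]
          congr 1
          exact Subtype.ext h
        · by_cases hl : l ∈ I
          · have hz : E i.1 l = 0 := by
              rw [hdelta l i.1 hl i.2]
              exact if_neg fun hh => h hh.symm
            simp [hz, h]
          · rw [hext, dif_neg hl]
            simp [h]
      rw [Finset.sum_congr rfl fun l _ => h2 l]
      simp [Finset.sum_ite_eq']
    exact h1
  let e1 : M ≃+ ({x // x ∈ I} → ℕ) :=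
    { toFun := φ, invFun := ψ, left_inv := left, right_inv := right, map_add' := φ.map_add }
  exact ⟨I.card, ⟨e1.trans (AddEquiv.arrowCongr I.equivFin (AddEquiv.refl ℕ))⟩⟩

def natLocMap : AddSubmonoid.LocalizationMap (⊤ : AddSubmonoid ℕ) ℤ :=
  { Nat.castAddMonoidHom ℤ with
    isLocalizationMap :=
      { map_addUnits := fun _ => AddGroup.isAddUnit _
        surj := fun z => ⟨(z.toNat, ⟨(-z).toNat, trivial⟩), by simp; omega⟩
        exists_of_eq := fun {x y} h => ⟨0, by simpa using Nat.cast_injective h⟩ } }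

/-- Every finitely generated projective `ℕ`-semimodule (i.e. every
retract, as a commutative monoid, of a finitely generated free semimodule `ℕ^k`) is free,
isomorphic to some `ℕ^m`; consequently the Grothendieck group of the monoid of ranks
(isomorphism classes of finitely generated free `ℕ`-modules) is `ℤ`. -/
theorem nat_projective_free_and_K0 :
    (∀ (M : Type) (_ : AddCommMonoid M) (k : ℕ) (i : M →+ (Fin k → ℕ))
      (p : (Fin k → ℕ) →+ M), p.comp i = AddMonoidHom.id M →
        ∃ m : ℕ, Nonempty (M ≃+ (Fin m → ℕ))) ∧
    (∃ φ : GrothendieckGroup ℕ ≃+ ℤ, ∀ a : ℕ, φ (grCls a) = (a : ℤ)) := by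
  constructor
  · intro M instM k i p h
    exact retract_free M k i p h
  · refine ⟨AddLocalization.addEquivOfQuotient natLocMap, fun a => ?_⟩
    show AddLocalization.addEquivOfQuotient natLocMap (AddLocalization.mk a 0) = (a : ℤ)
    rw [AddLocalization.addEquivOfQuotient_mk, AddSubmonoid.LocalizationMap.mk'_zero]
    rfl
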